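/- arXiv:2405.07811 — 2 statements merged into one kernel-verified Lean document; each statement's English description precedes it below -/
import Mathlib

section
/- For every natural number m, the diagonal Gram coefficient satisfies a_{m,m} = T^{−1/2} · 2^{−2m − 1/2} · (2m)! / (m!)². -/
/-!
Substituting `x = v / √T` gives `a_{m,m} = (√T)⁻¹ (2^m m! √π)⁻¹ ∫ H_m(x)² w(x) dx` with
`w = e^{-2x²}`. For this weight the `H_m` are not orthogonal, but integration by parts
(`∫ p' w = 4 ∫ x p w`) combined with the raising identity `H_{k+1} = 2x H_k - H_k'` gives
`∫ H_{k+1} H_n w = -∫ H_k H_{n+1} w`, hence `∫ H_m² w = (-1)^m ∫ H_{2m} w`. The three-term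
recurrence and one more integration by parts give `∫ H_{n+2} w = -(n+1) ∫ H_n w`, so
`∫ H_{2m} w = (-1)^m (2m)! / (2^m m!) · √(π/2)`.
-/

open Real MeasureTheory Matrix Filter

/-- Physicists' Hermite polynomials: H_0 = 1, H_1 = 2x, H_{n+1} = 2x H_n - 2n H_{n-1}. -/
noncomputable def hermiteH : ℕ → ℝ → ℝ
  | 0, _ => 1
  | 1, x => 2 * x
  | (n + 2), x => 2 * x * hermiteH (n + 1) x - 2 * (n + 1) * hermiteH n x

/-- Asymmetric Hermite basis function ψ_m. -/
noncomputable def psi (T : ℝ) (m : ℕ) (v : ℝ) : ℝ :=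
  Real.exp (-v ^ 2 / T) * T ^ (-(1 : ℝ) / 2) *
    ((2 : ℝ) ^ m * (Nat.factorial m : ℝ) * Real.sqrt π) ^ (-(1 : ℝ) / 2) *
    hermiteH m (v / Real.sqrt T)

/-- Gram coefficient a_{m,n} = ∫ ψ_m ψ_n. -/
noncomputable def gramA (T : ℝ) (m n : ℕ) : ℝ := ∫ v : ℝ, psi T m v * psi T n v

open Polynomial

noncomputable def physHermite : ℕ → ℝ[X]
  | 0 => 1
  | 1 => C 2 * X
  | (n + 2) => C 2 * X * physHermite (n + 1) - C (2 * ((n : ℝ) + 1)) * physHermite n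

lemma physHermite_add_two (n : ℕ) :
    physHermite (n + 2) = C 2 * X * physHermite (n + 1) - C (2 * ((n : ℝ) + 1)) * physHermite n :=
  rfl

lemma eval_physHermite (n : ℕ) (x : ℝ) : (physHermite n).eval x = hermiteH n x := by
  induction n using Nat.strong_induction_on with
  | _ n ih =>
    match n with
    | 0 => simp [physHermite, hermiteH]
    | 1 => simp [physHermite, hermiteH]
    | n + 2 =>
      rw [physHermite_add_two, hermiteH, ← ih (n + 1) (by omega), ← ih n (by omega)]
      simp

lemma derivative_physHermite_succ (n : ℕ) :
    derivative (physHermite (n + 1)) = C (2 * ((n : ℝ) + 1)) * physHermite n := by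
  induction n using Nat.strong_induction_on with
  | _ n ih =>
    match n with
    | 0 => simp [physHermite]
    | 1 =>
      simp only [physHermite, derivative_sub, derivative_mul, derivative_C,
        derivative_X, derivative_one]
      simp only [map_mul, map_add, map_ofNat, map_one, Nat.cast_zero, Nat.cast_one]
      ring
    | n + 2 =>
      rw [physHermite_add_two (n + 1)]
      simp only [derivative_sub, derivative_mul, derivative_C, derivative_X]
      rw [ih (n + 1) (by omega), ih n (by omega), physHermite_add_two n]
      simp only [map_mul, map_add, map_ofNat, map_one, map_natCast]
      push_cast
      ring

lemma physHermite_succ (n : ℕ) :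
    physHermite (n + 1) = C 2 * X * physHermite n - derivative (physHermite n) := by
  cases n with
  | zero => simp [physHermite]
  | succ n =>
    rw [physHermite_add_two, derivative_physHermite_succ]

lemma integrable_pow_mul_exp_neg_mul_sq {b : ℝ} (hb : 0 < b) (n : ℕ) :
    Integrable (fun x : ℝ => x ^ n * exp (-b * x ^ 2)) := by
  simpa [rpow_natCast] using
    integrable_rpow_mul_exp_neg_mul_sq hb (s := n) (by linarith [n.cast_nonneg (α := ℝ)])

lemma integrable_eval_mul_exp_neg_mul_sq {b : ℝ} (hb : 0 < b) (p : ℝ[X]) :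
    Integrable (fun x : ℝ => p.eval x * exp (-b * x ^ 2)) := by
  simp_rw [eval_eq_sum_range, Finset.sum_mul, mul_assoc]
  exact integrable_finsetSum _ fun i _ =>
    (integrable_pow_mul_exp_neg_mul_sq hb i).const_mul _

noncomputable def gaussIntegral (b : ℝ) (p : ℝ[X]) : ℝ :=
  ∫ x : ℝ, p.eval x * exp (-b * x ^ 2)

section gaussIntegral

variable {b : ℝ}

lemma gaussIntegral_one : gaussIntegral b 1 = √(π / b) := by
  simpa [gaussIntegral] using integral_gaussian b

lemma gaussIntegral_add (hb : 0 < b) (p q : ℝ[X]) :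
    gaussIntegral b (p + q) = gaussIntegral b p + gaussIntegral b q := by
  simp only [gaussIntegral, eval_add, add_mul]
  exact integral_add (integrable_eval_mul_exp_neg_mul_sq hb p)
    (integrable_eval_mul_exp_neg_mul_sq hb q)

lemma gaussIntegral_sub (hb : 0 < b) (p q : ℝ[X]) :
    gaussIntegral b (p - q) = gaussIntegral b p - gaussIntegral b q := by
  simp only [gaussIntegral, eval_sub, sub_mul]
  exact integral_sub (integrable_eval_mul_exp_neg_mul_sq hb p)
    (integrable_eval_mul_exp_neg_mul_sq hb q)

lemma gaussIntegral_C_mul (c : ℝ) (p : ℝ[X]) :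
    gaussIntegral b (C c * p) = c * gaussIntegral b p := by
  simp only [gaussIntegral, eval_mul, eval_C, mul_assoc]
  exact integral_const_mul c _

lemma gaussIntegral_derivative (hb : 0 < b) (p : ℝ[X]) :
    gaussIntegral b (derivative p) = 2 * b * gaussIntegral b (X * p) := by
  have hderiv (x : ℝ) : HasDerivAt (fun y => p.eval y * exp (-b * y ^ 2))
      ((derivative p - C (2 * b) * X * p).eval x * exp (-b * x ^ 2)) x := by
    have hexp : HasDerivAt (fun y => exp (-b * y ^ 2)) (exp (-b * x ^ 2) * (-b * (2 * x))) x := by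
      simpa using ((hasDerivAt_pow 2 x).const_mul (-b)).exp
    refine ((p.hasDerivAt x).mul hexp).congr_deriv ?_
    simp only [eval_sub, eval_mul, eval_C, eval_X]
    ring
  have h := integral_eq_zero_of_hasDerivAt_of_integrable hderiv
    (integrable_eval_mul_exp_neg_mul_sq hb _) (integrable_eval_mul_exp_neg_mul_sq hb p)
  rwa [← gaussIntegral, gaussIntegral_sub hb, sub_eq_zero, mul_assoc, gaussIntegral_C_mul] at h

end gaussIntegral

lemma gaussIntegral_physHermite_succ_mul (m n : ℕ) :
    gaussIntegral 2 (physHermite (m + 1) * physHermite n) =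
      -gaussIntegral 2 (physHermite m * physHermite (n + 1)) := by
  have hsum : physHermite (m + 1) * physHermite n + physHermite m * physHermite (n + 1) =
      C (2 * 2) * (X * (physHermite m * physHermite n)) -
        derivative (physHermite m * physHermite n) := by
    rw [physHermite_succ m, physHermite_succ n, derivative_mul]
    simp only [map_mul, map_ofNat]
    ring
  have h := congrArg (gaussIntegral 2) hsum
  rw [gaussIntegral_add two_pos, gaussIntegral_sub two_pos, gaussIntegral_derivative two_pos,
    gaussIntegral_C_mul, sub_self] at h
  linarith

lemma gaussIntegral_physHermite_mul (k n : ℕ) :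
    gaussIntegral 2 (physHermite k * physHermite n) =
      (-1) ^ k * gaussIntegral 2 (physHermite (n + k)) := by
  induction k generalizing n with
  | zero => simp [physHermite]
  | succ k ih =>
    rw [gaussIntegral_physHermite_succ_mul, ih, pow_succ, add_right_comm, add_assoc]
    ring

lemma gaussIntegral_physHermite_add_two (n : ℕ) :
    gaussIntegral 2 (physHermite (n + 2)) = -((n : ℝ) + 1) * gaussIntegral 2 (physHermite n) := by
  have h := gaussIntegral_derivative two_pos (physHermite (n + 1))
  rw [derivative_physHermite_succ, gaussIntegral_C_mul] at h
  rw [physHermite_add_two, gaussIntegral_sub two_pos, gaussIntegral_C_mul, mul_assoc,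
    gaussIntegral_C_mul]
  linarith

lemma gaussIntegral_physHermite_two_mul (m : ℕ) :
    gaussIntegral 2 (physHermite (2 * m)) =
      (-1) ^ m * ((2 * m).factorial / (2 ^ m * m.factorial)) * √(π / 2) := by
  induction m with
  | zero => simp [physHermite, gaussIntegral_one]
  | succ m ih =>
    rw [mul_add_one, gaussIntegral_physHermite_add_two, ih, Nat.factorial_succ,
      Nat.factorial_succ (2 * m), Nat.factorial_succ m]
    push_cast
    field_simp
    ring

lemma gaussIntegral_physHermite_mul_self (m : ℕ) :
    gaussIntegral 2 (physHermite m * physHermite m) =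
      (2 * m).factorial / (2 ^ m * m.factorial) * √(π / 2) := by
  rw [gaussIntegral_physHermite_mul, ← two_mul, gaussIntegral_physHermite_two_mul, ← mul_assoc,
    ← mul_assoc, ← mul_pow]
  simp

lemma rpow_neg_one_div_two {x : ℝ} (hx : 0 ≤ x) : x ^ (-(1 : ℝ) / 2) = (√x)⁻¹ := by
  rw [neg_div, rpow_neg hx, sqrt_eq_rpow]

lemma psi_mul_self {T : ℝ} (hT : 0 < T) (m : ℕ) (v : ℝ) :
    psi T m v * psi T m v = T⁻¹ * (2 ^ m * m.factorial * √π)⁻¹ *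
      ((physHermite m * physHermite m).eval (v / √T) * exp (-2 * (v / √T) ^ 2)) := by
  have hN : (0 : ℝ) ≤ 2 ^ m * m.factorial * √π := by positivity
  have hexp : exp (-2 * (v / √T) ^ 2) = exp (-v ^ 2 / T) * exp (-v ^ 2 / T) := by
    rw [← exp_add, div_pow, sq_sqrt hT.le]
    ring_nf
  simp only [psi, rpow_neg_one_div_two hT.le, rpow_neg_one_div_two hN, ← eval_physHermite,
    eval_mul, hexp]
  have hinv {x : ℝ} (hx : 0 ≤ x) : x⁻¹ = (√x)⁻¹ * (√x)⁻¹ := by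
    rw [← mul_inv, mul_self_sqrt hx]
  rw [hinv hT.le, hinv hN]
  ring

lemma gramA_self {T : ℝ} (hT : 0 < T) (m : ℕ) :
    gramA T m m = (√T)⁻¹ * (2 ^ m * m.factorial * √π)⁻¹ *
      gaussIntegral 2 (physHermite m * physHermite m) := by
  simp_rw [gramA, psi_mul_self hT, integral_const_mul]
  rw [Measure.integral_comp_div
      (fun x => (physHermite m * physHermite m).eval x * exp (-2 * x ^ 2)), abs_of_pos (sqrt_pos.2 hT), smul_eq_mul, ← gaussIntegral]
  have hT' : √T ≠ 0 := (sqrt_pos.2 hT).ne'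
  field_simp
  rw [sq_sqrt hT.le]

theorem gramA_diag (T : ℝ) (hT : 0 < T) (m : ℕ) :
    gramA T m m =
      T ^ (-(1 : ℝ) / 2) * (2 : ℝ) ^ (-(2 * (m : ℝ)) - 1 / 2) *
        (Nat.factorial (2 * m) : ℝ) / ((Nat.factorial m : ℝ) ^ 2) := by
  have htwo : (2 : ℝ) ^ (-(2 * (m : ℝ)) - 1 / 2) = ((2 ^ m) ^ 2 * √2)⁻¹ := by
    rw [rpow_sub two_pos, rpow_neg zero_le_two, ← sqrt_eq_rpow, ← pow_mul, mul_comm m,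
      ← rpow_natCast]
    push_cast
    ring
  rw [gramA_self hT, gaussIntegral_physHermite_mul_self, rpow_neg_one_div_two hT.le, htwo,
    sqrt_div pi_pos.le]
  field_simp
end

section
/- Let N ∈ ℕ, let B^N be the (N+1)×(N+1) real matrix with entries b_{m,n} = √T·√((n+1)/2) when m = n+1, b_{m,n} = √T·√(n/2) when m = n−1, and 0 otherwise, and let M be the (N+1)×(N+1) matrix whose entries are M_{m,n} = (A^N · B^N)_{m,n} + √(T(N+1)/2) · a_{m, N+1} when n = N, and M_{m,n} = (A^N · B^N)_{m,n} otherwise. Then M is symmetric: M = Mᵀ. (This expresses that the first modified advection matrix B̄^N = B^N + (A^N)^{−1}·A₁₂^N·B₂₁^N is symmetric with respect to the truncated Gram matrix.) -/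
open Real MeasureTheory Matrix Filter

/-- Truncated Gram matrix A^N. -/
noncomputable def Amat (T : ℝ) (N : ℕ) : Matrix (Fin (N + 1)) (Fin (N + 1)) ℝ :=
  fun m n => gramA T (m : ℕ) (n : ℕ)

/-- Truncated advection matrix B^N. -/
noncomputable def Bmat (T : ℝ) (N : ℕ) : Matrix (Fin (N + 1)) (Fin (N + 1)) ℝ :=
  fun m n =>
    if (m : ℕ) = (n : ℕ) + 1 then Real.sqrt T * Real.sqrt (((n : ℝ) + 1) / 2)
    else if (m : ℕ) + 1 = (n : ℕ) then Real.sqrt T * Real.sqrt ((n : ℝ) / 2)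
    else 0

/-! The normalised functions satisfy the three-term recurrence
`(v / √T) ψ_n = √((n+1)/2) ψ_{n+1} + √(n/2) ψ_{n-1}`. Hence `√T` times that combination of
Gram coefficients is the moment `∫ v ψ_m ψ_n`, which is symmetric in `m` and `n`. Column `n` of
`A^N B^N` is exactly this combination except in the last column, where truncation drops the term
`√(T(N+1)/2) a_{m,N+1}` that the boundary correction adds back. -/

-- At `n = 0` the truncated `n - 1` here and below is harmless: its coefficient vanishes.
lemma hermiteH_succ (n : ℕ) (x : ℝ) :
    hermiteH (n + 1) x = 2 * x * hermiteH n x - 2 * n * hermiteH (n - 1) x := by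
  cases n <;> simp [hermiteH]

lemma exists_hermiteH_eq_eval (n : ℕ) : ∃ Q : Polynomial ℝ, ∀ x, hermiteH n x = Q.eval x := by
  induction n using Nat.strong_induction_on with
  | _ n ih =>
    match n with
    | 0 => exact ⟨1, by simp [hermiteH]⟩
    | 1 => exact ⟨2 * Polynomial.X, by simp [hermiteH]⟩
    | k + 2 =>
      obtain ⟨Q₁, hQ₁⟩ := ih (k + 1) (by omega)
      obtain ⟨Q₀, hQ₀⟩ := ih k (by omega)
      exact ⟨2 * Polynomial.X * Q₁ - Polynomial.C (2 * (k + 1 : ℝ)) * Q₀,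
        fun x => by simp [hermiteH, hQ₁, hQ₀]⟩

lemma Polynomial.integrable_eval_mul_exp_neg_mul_sq {b : ℝ} (hb : 0 < b) (P : Polynomial ℝ) :
    Integrable (fun v : ℝ => P.eval v * Real.exp (-b * v ^ 2)) := by
  have hmonomial (k : ℕ) : Integrable (fun v : ℝ => v ^ k * Real.exp (-b * v ^ 2)) := by
    simpa [Real.rpow_natCast] using
      integrable_rpow_mul_exp_neg_mul_sq hb (s := k) (by linarith [k.cast_nonneg (α := ℝ)])
  have hsum : (fun v : ℝ => P.eval v * Real.exp (-b * v ^ 2)) = fun v =>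
      ∑ k ∈ Finset.range (P.natDegree + 1), P.coeff k * (v ^ k * Real.exp (-b * v ^ 2)) := by
    ext v
    rw [Polynomial.eval_eq_sum_range, Finset.sum_mul]
    simp only [mul_assoc]
  rw [hsum]
  exact integrable_finsetSum _ fun k _ => (hmonomial k).const_mul _

noncomputable def hermiteNorm (n : ℕ) : ℝ := (Real.sqrt (2 ^ n * n.factorial * Real.sqrt π))⁻¹

lemma psi_eq_hermiteNorm (T : ℝ) (n : ℕ) (v : ℝ) :
    psi T n v = Real.exp (-v ^ 2 / T) * T ^ (-(1 : ℝ) / 2) * hermiteNorm n *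
      hermiteH n (v / Real.sqrt T) := by
  have hpos : (0 : ℝ) < 2 ^ n * n.factorial * Real.sqrt π := by
    have := Real.sqrt_pos.mpr Real.pi_pos
    positivity
  have hnorm : (2 ^ n * n.factorial * Real.sqrt π) ^ (-(1 : ℝ) / 2) = hermiteNorm n := by
    rw [hermiteNorm, neg_div, Real.rpow_neg hpos.le, ← Real.sqrt_eq_rpow]
  rw [psi, hnorm]

lemma hermiteNorm_succ (n : ℕ) :
    hermiteNorm (n + 1) = hermiteNorm n / Real.sqrt (2 * (n + 1)) := by
  rw [hermiteNorm, hermiteNorm, pow_succ, Nat.factorial_succ, Nat.cast_mul,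
    show (2 : ℝ) ^ n * 2 * (((n + 1 : ℕ) : ℝ) * n.factorial) * Real.sqrt π =
      2 * (n + 1) * (2 ^ n * n.factorial * Real.sqrt π) by push_cast; ring,
    Real.sqrt_mul (by positivity), mul_inv, div_eq_mul_inv, mul_comm]

lemma sqrt_div_two (x : ℝ) : Real.sqrt (x / 2) = Real.sqrt (2 * x) / 2 := by
  rw [show 2 * x = 2 ^ 2 * (x / 2) by ring, Real.sqrt_mul (by positivity),
    Real.sqrt_sq (by norm_num)]
  ring

lemma sqrt_mul_hermiteNorm_succ (n : ℕ) :
    Real.sqrt ((n + 1) / 2) * hermiteNorm (n + 1) = hermiteNorm n / 2 := by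
  have hs : 0 < Real.sqrt (2 * (n + 1)) := Real.sqrt_pos.mpr (by positivity)
  rw [hermiteNorm_succ, sqrt_div_two]
  field_simp

lemma sqrt_mul_hermiteNorm_pred (n : ℕ) :
    Real.sqrt (n / 2) * hermiteNorm (n - 1) = n * hermiteNorm n := by
  cases n with
  | zero => simp
  | succ k =>
    have hs : 0 < Real.sqrt (2 * (k + 1)) := Real.sqrt_pos.mpr (by positivity)
    have hsq : Real.sqrt (2 * (k + 1)) ^ 2 = 2 * (k + 1) := Real.sq_sqrt (by positivity)
    rw [Nat.add_sub_cancel, hermiteNorm_succ, Nat.cast_succ, sqrt_div_two]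
    field_simp
    linear_combination hermiteNorm k * hsq

lemma psi_recurrence (T : ℝ) (n : ℕ) (v : ℝ) :
    Real.sqrt ((n + 1) / 2) * psi T (n + 1) v + Real.sqrt (n / 2) * psi T (n - 1) v =
      v / Real.sqrt T * psi T n v := by
  simp only [psi_eq_hermiteNorm, hermiteH_succ]
  linear_combination
    Real.exp (-v ^ 2 / T) * T ^ (-(1 : ℝ) / 2) *
      ((2 * (v / Real.sqrt T) * hermiteH n (v / Real.sqrt T) -
        2 * n * hermiteH (n - 1) (v / Real.sqrt T)) * sqrt_mul_hermiteNorm_succ n +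
      hermiteH (n - 1) (v / Real.sqrt T) * sqrt_mul_hermiteNorm_pred n)

lemma exists_psi_eq_eval_mul_exp (T : ℝ) (n : ℕ) :
    ∃ P : Polynomial ℝ, ∀ v, psi T n v = P.eval v * Real.exp (-(1 / T) * v ^ 2) := by
  obtain ⟨Q, hQ⟩ := exists_hermiteH_eq_eval n
  refine ⟨Polynomial.C (T ^ (-(1 : ℝ) / 2) * hermiteNorm n) *
    Q.comp (Polynomial.C (Real.sqrt T)⁻¹ * Polynomial.X), fun v => ?_⟩
  simp only [psi_eq_hermiteNorm, hQ, Polynomial.eval_mul, Polynomial.eval_C, Polynomial.eval_comp,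
    Polynomial.eval_X]
  rw [show -(1 / T) * v ^ 2 = -v ^ 2 / T by ring, div_eq_inv_mul v]
  ring

lemma integrable_psi_mul_psi {T : ℝ} (hT : 0 < T) (m n : ℕ) :
    Integrable (fun v => psi T m v * psi T n v) := by
  obtain ⟨P, hP⟩ := exists_psi_eq_eval_mul_exp T m
  obtain ⟨Q, hQ⟩ := exists_psi_eq_eval_mul_exp T n
  have hprod (v : ℝ) : psi T m v * psi T n v = (P * Q).eval v * Real.exp (-(2 / T) * v ^ 2) := by
    rw [hP, hQ, Polynomial.eval_mul, show -(2 / T) * v ^ 2 = -(1 / T) * v ^ 2 + -(1 / T) * v ^ 2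
      by ring, Real.exp_add]
    ring
  simp_rw [hprod]
  exact (P * Q).integrable_eval_mul_exp_neg_mul_sq (by positivity)

lemma integral_mul_psi_mul_psi {T : ℝ} (hT : 0 < T) (m n : ℕ) :
    ∫ v, v * psi T m v * psi T n v =
      Real.sqrt T * (Real.sqrt ((n + 1) / 2) * gramA T m (n + 1) +
        Real.sqrt (n / 2) * gramA T m (n - 1)) := by
  rw [gramA, gramA, ← integral_const_mul, ← integral_const_mul,
    ← integral_add ((integrable_psi_mul_psi hT m _).const_mul _)
      ((integrable_psi_mul_psi hT m _).const_mul _), ← integral_const_mul]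
  congr 1
  ext v
  have hrec : v * psi T n v = Real.sqrt T *
      (Real.sqrt ((n + 1) / 2) * psi T (n + 1) v + Real.sqrt (n / 2) * psi T (n - 1) v) := by
    rw [psi_recurrence]
    field_simp
  linear_combination psi T m v * hrec

lemma Bmat_apply_eq (T : ℝ) (N : ℕ) (k n : Fin (N + 1)) :
    Bmat T N k n = Real.sqrt T *
      ((if (k : ℕ) = n + 1 then Real.sqrt ((n + 1) / 2) else 0) +
        if (k : ℕ) = n - 1 then Real.sqrt (n / 2) else 0) := by
  rw [Bmat]
  obtain hn | hn := Nat.eq_zero_or_pos n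
  · simp [hn]
  · split_ifs <;> first | omega | ring

lemma Amat_mul_Bmat_apply (T : ℝ) (N : ℕ) (m n : Fin (N + 1)) :
    (Amat T N * Bmat T N) m n = Real.sqrt T *
      ((if (n : ℕ) + 1 ≤ N then Real.sqrt ((n + 1) / 2) * gramA T m (n + 1) else 0) +
        Real.sqrt (n / 2) * gramA T m (n - 1)) := by
  have hsum := Fin.sum_univ_eq_sum_range (fun k => gramA T m k * (Real.sqrt T *
      ((if k = n + 1 then Real.sqrt ((n + 1) / 2) else 0) +
        if k = n - 1 then Real.sqrt (n / 2) else 0))) (N + 1)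
  simp only [mul_apply, Amat, Bmat_apply_eq] at hsum ⊢
  rw [hsum]
  simp only [mul_add, Finset.sum_add_distrib, mul_ite, mul_zero, Finset.sum_ite_eq',
    Finset.mem_range]
  rw [if_pos (show (n : ℕ) - 1 < N + 1 by omega)]
  split_ifs <;> first | omega | ring

theorem modified_advection_symmetric (T : ℝ) (hT : 0 < T) (N : ℕ)
    (M : Matrix (Fin (N + 1)) (Fin (N + 1)) ℝ)
    (hM : ∀ m n : Fin (N + 1),
      M m n = if (n : ℕ) = N then
          (Amat T N * Bmat T N) m n +
            Real.sqrt (T * ((N : ℝ) + 1) / 2) * gramA T (m : ℕ) (N + 1)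
        else (Amat T N * Bmat T N) m n) :
    M = Mᵀ := by
  have hentry (m n : Fin (N + 1)) : M m n = ∫ v, v * psi T m v * psi T n v := by
    rw [hM, integral_mul_psi_mul_psi hT, Amat_mul_Bmat_apply]
    split_ifs with hN hN'
    · omega
    · rw [hN, mul_div_assoc, Real.sqrt_mul' _ (by positivity)]
      ring
    · ring
    · omega
  ext m n
  rw [transpose_apply, hentry, hentry]
  congr 1
  ext v
  ring
end
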